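/- Cauchy indices are additive over path join: if γ₁ and γ₂ are continuous paths with γ₁(1) = γ₂(0), each having finitely many real-part-constancy segments with respect to z₀, then cindex_pathE (γ₁ ++ γ₂) z₀ = cindex_pathE γ₁ z₀ + cindex_pathE γ₂ z₀. -/

import Mathlib

open Complex Filter Topology Polynomial Set

open Classical in
noncomputable def jumpF (f : ℝ → ℝ) (F : Filter ℝ) : ℝ :=
  if Tendsto f F atTop then 1/2 else if Tendsto f F atBot then -1/2 else 0

noncomputable def cindexE (a b : ℝ) (f : ℝ → ℝ) : ℝ :=
  (∑ᶠ x ∈ {x : ℝ | jumpF f (𝓝[>] x) ≠ 0 ∧ a ≤ x ∧ x < b}, jumpF f (𝓝[>] x)) -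
  (∑ᶠ x ∈ {x : ℝ | jumpF f (𝓝[<] x) ≠ 0 ∧ a < x ∧ x ≤ b}, jumpF f (𝓝[<] x))

noncomputable def cindexPathE (γ : ℝ → ℂ) (z : ℂ) : ℝ :=
  cindexE 0 1 fun t => (γ t - z).im / (γ t - z).re

/-- Joining two paths parametrised on `[0,1]`. -/
noncomputable def joinPaths (γ₁ γ₂ : ℝ → ℂ) : ℝ → ℂ :=
  fun t => if t ≤ 1/2 then γ₁ (2 * t) else γ₂ (2 * t - 1)

/-- A predicate `P` admits a finite segmentation of `[a,b]`. -/
inductive FinitePsegments (P : ℝ → Prop) : ℝ → ℝ → Prop where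
  | emptyI (a b : ℝ) (hab : b ≤ a) : FinitePsegments P a b
  | insertI_1 (a b s : ℝ) (hs : s ∈ Set.Ico a b) (h0 : s = a ∨ P s)
      (hP : ∀ t ∈ Set.Ioo s b, P t) (hrec : FinitePsegments P a s) :
      FinitePsegments P a b
  | insertI_2 (a b s : ℝ) (hs : s ∈ Set.Ico a b) (h0 : s = a ∨ P s)
      (hP : ∀ t ∈ Set.Ioo s b, ¬ P t) (hrec : FinitePsegments P a s) :
      FinitePsegments P a b

/-- `[0,1]` decomposes into finitely many consecutive subintervals on each of whose
interiors `Re (γ t - z) = 0` holds identically or fails identically. -/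
def finiteReZSegments (γ : ℝ → ℂ) (z : ℂ) : Prop :=
  FinitePsegments (fun t => (γ t - z).re = 0) 0 1

/-! On `(0, 1/2)` and on `(1/2, 1)` the joined path is `γ₁` resp. `γ₂` composed with an
increasing affine map. The Cauchy index of `f` over `[a, b]` depends only on `f` on `(a, b)`, is
invariant under increasing reparametrisation, and is additive over `[a, b] ∪ [b, c]` once only
finitely many jumps occur on either side. Finiteness holds because away from the finitely many
endpoints of the segments, `Re (γ t - z)` is either locally zero (so `Im / Re` is locally `0`) or
nonzero (so `Im / Re` is continuous). -/

def HasFiniteJumps (f : ℝ → ℝ) (a b : ℝ) : Prop :=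
  (Ico a b ∩ Function.support fun x => jumpF f (𝓝[>] x)).Finite ∧
    (Ioc a b ∩ Function.support fun x => jumpF f (𝓝[<] x)).Finite

lemma cindexE_eq_finsum (a b : ℝ) (f : ℝ → ℝ) :
    cindexE a b f =
      (∑ᶠ x ∈ Ico a b, jumpF f (𝓝[>] x)) - ∑ᶠ x ∈ Ioc a b, jumpF f (𝓝[<] x) := by
  rw [← finsum_mem_inter_support, ← finsum_mem_inter_support (s := Ioc a b), inter_comm,
    inter_comm (Ioc a b)]
  rfl

lemma jumpF_congr {f g : ℝ → ℝ} {F : Filter ℝ} (h : f =ᶠ[F] g) :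
    jumpF f F = jumpF g F := by
  unfold jumpF
  rw [tendsto_congr' h, tendsto_congr' h]

lemma jumpF_eq_zero_of_tendsto {f : ℝ → ℝ} {F : Filter ℝ} [F.NeBot] {l : ℝ}
    (h : Tendsto f F (𝓝 l)) : jumpF f F = 0 := by
  simp [jumpF, not_tendsto_atTop_of_tendsto_nhds h, not_tendsto_atBot_of_tendsto_nhds h]

lemma jumpF_comp_of_map_eq {f φ : ℝ → ℝ} {F G : Filter ℝ} (h : map φ F = G) :
    jumpF (f ∘ φ) F = jumpF f G := by
  unfold jumpF
  rw [← tendsto_map'_iff, ← tendsto_map'_iff, h]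

lemma jumpF_comp_orderIso_nhdsGT (f : ℝ → ℝ) (e : ℝ ≃o ℝ) (x : ℝ) :
    jumpF (f ∘ e) (𝓝[>] x) = jumpF f (𝓝[>] (e x)) :=
  jumpF_comp_of_map_eq <| by
    rw [← e.coe_toHomeomorph, e.toHomeomorph.isEmbedding.map_nhdsWithin_eq, e.coe_toHomeomorph,
      e.image_Ioi]

lemma jumpF_comp_orderIso_nhdsLT (f : ℝ → ℝ) (e : ℝ ≃o ℝ) (x : ℝ) :
    jumpF (f ∘ e) (𝓝[<] x) = jumpF f (𝓝[<] (e x)) :=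
  jumpF_comp_of_map_eq <| by
    rw [← e.coe_toHomeomorph, e.toHomeomorph.isEmbedding.map_nhdsWithin_eq, e.coe_toHomeomorph,
      e.image_Iio]

section EqOn

variable {f g : ℝ → ℝ} {a b x : ℝ}

lemma jumpF_nhdsGT_congr (h : EqOn f g (Ioo a b)) (hx : x ∈ Ico a b) :
    jumpF f (𝓝[>] x) = jumpF g (𝓝[>] x) :=
  jumpF_congr <| mem_of_superset (Ioo_mem_nhdsGT hx.2) fun _ ht => h ⟨hx.1.trans_lt ht.1, ht.2⟩

lemma jumpF_nhdsLT_congr (h : EqOn f g (Ioo a b)) (hx : x ∈ Ioc a b) :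
    jumpF f (𝓝[<] x) = jumpF g (𝓝[<] x) :=
  jumpF_congr <| mem_of_superset (Ioo_mem_nhdsLT hx.1) fun _ ht => h ⟨ht.1, ht.2.trans_le hx.2⟩

lemma cindexE_congr (h : EqOn f g (Ioo a b)) : cindexE a b f = cindexE a b g := by
  rw [cindexE_eq_finsum, cindexE_eq_finsum,
    finsum_mem_congr rfl fun x hx => jumpF_nhdsGT_congr h hx,
    finsum_mem_congr rfl fun x hx => jumpF_nhdsLT_congr h hx]

lemma HasFiniteJumps.congr (hf : HasFiniteJumps f a b) (h : EqOn f g (Ioo a b)) :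
    HasFiniteJumps g a b := by
  refine ⟨hf.1.subset ?_, hf.2.subset ?_⟩ <;> rintro x ⟨hx, hjump⟩
  · exact ⟨hx, by rwa [Function.mem_support, jumpF_nhdsGT_congr h hx]⟩
  · exact ⟨hx, by rwa [Function.mem_support, jumpF_nhdsLT_congr h hx]⟩

end EqOn

section OrderIso

variable (f : ℝ → ℝ) (e : ℝ ≃o ℝ) (a b : ℝ)

lemma cindexE_comp_orderIso : cindexE a b (f ∘ e) = cindexE (e a) (e b) f := by
  simp only [cindexE_eq_finsum, ← e.image_Ico, ← e.image_Ioc,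
    finsum_mem_image e.injective.injOn, jumpF_comp_orderIso_nhdsGT, jumpF_comp_orderIso_nhdsLT]

variable {f e a b}

lemma HasFiniteJumps.comp_orderIso (hf : HasFiniteJumps f (e a) (e b)) :
    HasFiniteJumps (f ∘ e) a b := by
  refine ⟨(hf.1.preimage e.injective.injOn).subset ?_,
    (hf.2.preimage e.injective.injOn).subset ?_⟩ <;> rintro x ⟨hx, hjump⟩
  · exact ⟨⟨e.monotone hx.1, e.strictMono hx.2⟩,
      by rwa [Function.mem_support, ← jumpF_comp_orderIso_nhdsGT]⟩
  · exact ⟨⟨e.strictMono hx.1, e.monotone hx.2⟩,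
      by rwa [Function.mem_support, ← jumpF_comp_orderIso_nhdsLT]⟩

end OrderIso

lemma cindexE_add {f : ℝ → ℝ} {a b c : ℝ} (hab : a ≤ b) (hbc : b ≤ c)
    (h₁ : HasFiniteJumps f a b) (h₂ : HasFiniteJumps f b c) :
    cindexE a c f = cindexE a b f + cindexE b c f := by
  simp only [cindexE_eq_finsum, ← Ico_union_Ico_eq_Ico hab hbc, ← Ioc_union_Ioc_eq_Ioc hab hbc,
    finsum_mem_union' Ico_disjoint_Ico_same h₁.1 h₂.1,
    finsum_mem_union' (Ioc_disjoint_Ioc_of_le le_rfl) h₁.2 h₂.2]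
  ring

lemma hasFiniteJumps_of_continuousAt {f : ℝ → ℝ} {a b : ℝ} {S : Set ℝ} (hS : S.Finite)
    (hf : ∀ x ∈ Ioo a b \ S, ContinuousAt f x) : HasFiniteJumps f a b := by
  have hjump {F : Filter ℝ} [F.NeBot] {x : ℝ} (hF : F ≤ 𝓝 x) (hx : x ∈ Ioo a b \ S) :
      jumpF f F = 0 :=
    jumpF_eq_zero_of_tendsto ((hf x hx).tendsto.mono_left hF)
  refine ⟨(hS.insert a).subset ?_, (hS.insert b).subset ?_⟩ <;> rintro x ⟨hx, hx0⟩ <;>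
    by_contra hxS <;> simp only [mem_insert_iff, not_or] at hxS
  · exact hx0 (hjump nhdsWithin_le_nhds ⟨⟨hx.1.lt_of_ne' hxS.1, hx.2⟩, hxS.2⟩)
  · exact hx0 (hjump nhdsWithin_le_nhds ⟨⟨hx.1, hx.2.lt_of_ne hxS.1⟩, hxS.2⟩)

lemma FinitePsegments.exists_finite_eventually_or {P : ℝ → Prop} {a b : ℝ}
    (h : FinitePsegments P a b) :
    ∃ S : Set ℝ, S.Finite ∧
      ∀ x ∈ Ioo a b \ S, (∀ᶠ t in 𝓝 x, P t) ∨ ∀ᶠ t in 𝓝 x, ¬ P t := by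
  have hseg {s b x : ℝ} {Q : ℝ → Prop} (hQ : ∀ t ∈ Ioo s b, Q t) (hx : x ∈ Ioo s b) :
      ∀ᶠ t in 𝓝 x, Q t :=
    eventually_of_mem (Ioo_mem_nhds hx.1 hx.2) hQ
  induction h with
  | emptyI b hab =>
    exact ⟨∅, finite_empty, fun x hx => absurd (hx.1.1.trans hx.1.2) hab.not_gt⟩
  | insertI_1 b s _ _ hP _ ih | insertI_2 b s _ _ hP _ ih =>
    obtain ⟨S, hS, hSx⟩ := ih
    refine ⟨insert s S, hS.insert s, fun x ⟨hx, hxS⟩ => ?_⟩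
    simp only [mem_insert_iff, not_or] at hxS
    rcases lt_or_gt_of_ne hxS.1 with hxs | hxs
    · exact hSx x ⟨⟨hx.1, hxs⟩, hxS.2⟩
    · simp only [hseg hP ⟨hxs, hx.2⟩, true_or, or_true]

lemma continuousAt_div_of_eventually_eq_zero_or_ne_zero {u v : ℝ → ℝ} {x : ℝ}
    (hu : ContinuousAt u x) (hv : ContinuousAt v x)
    (h : (∀ᶠ t in 𝓝 x, v t = 0) ∨ v x ≠ 0) : ContinuousAt (fun t => u t / v t) x := by
  rcases h with hzero | hne
  · refine (continuousAt_const (y := (0 : ℝ))).congr ?_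
    filter_upwards [hzero] with t ht
    rw [ht, div_zero]
  · exact hu.div hv hne

lemma hasFiniteJumps_div {u v : ℝ → ℝ} {a b : ℝ}
    (hseg : FinitePsegments (fun t => v t = 0) a b) (hu : ContinuousOn u (Icc a b))
    (hv : ContinuousOn v (Icc a b)) :
    HasFiniteJumps (fun t => u t / v t) a b := by
  obtain ⟨S, hS, hSx⟩ := hseg.exists_finite_eventually_or
  refine hasFiniteJumps_of_continuousAt hS fun x hx => ?_
  have hIcc : Icc a b ∈ 𝓝 x := Icc_mem_nhds hx.1.1 hx.1.2
  exact continuousAt_div_of_eventually_eq_zero_or_ne_zero (hu.continuousAt hIcc)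
    (hv.continuousAt hIcc) ((hSx x hx).imp_right fun h => h.self_of_nhds)

lemma hasFiniteJumps_of_finiteReZSegments {γ : ℝ → ℂ} {z : ℂ} (h : finiteReZSegments γ z)
    (hγ : ContinuousOn γ (Icc 0 1)) :
    HasFiniteJumps (fun t => (γ t - z).im / (γ t - z).re) 0 1 :=
  have hγz : ContinuousOn (fun t => γ t - z) (Icc 0 1) := hγ.sub continuousOn_const
  hasFiniteJumps_div h (continuous_im.comp_continuousOn hγz) (continuous_re.comp_continuousOn hγz)

theorem cindex_pathE_joinpaths_general (γ₁ γ₂ : ℝ → ℂ) (z₀ : ℂ)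
    (h1 : finiteReZSegments γ₁ z₀) (h2 : finiteReZSegments γ₂ z₀)
    (hp1 : ContinuousOn γ₁ (Set.Icc 0 1)) (hp2 : ContinuousOn γ₂ (Set.Icc 0 1)) :
    cindexPathE (joinPaths γ₁ γ₂) z₀ = cindexPathE γ₁ z₀ + cindexPathE γ₂ z₀ := by
  let e₁ : ℝ ≃o ℝ := OrderIso.mulLeft₀ 2 two_pos
  let e₂ : ℝ ≃o ℝ := e₁.trans (OrderIso.subRight 1)
  obtain ⟨he₁0, he₁h, he₂h, he₂1⟩ :
      e₁ 0 = 0 ∧ e₁ (1 / 2) = 1 ∧ e₂ (1 / 2) = 0 ∧ e₂ 1 = 1 := by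
    norm_num [e₁, e₂]
  let q (γ : ℝ → ℂ) (t : ℝ) : ℝ := (γ t - z₀).im / (γ t - z₀).re
  have hq₁ : EqOn (q (joinPaths γ₁ γ₂)) (q γ₁ ∘ e₁) (Ioo 0 (1 / 2)) := fun t ht => by
    show q (joinPaths γ₁ γ₂) t = q γ₁ (2 * t)
    simp only [q, joinPaths, if_pos ht.2.le]
  have hq₂ : EqOn (q (joinPaths γ₁ γ₂)) (q γ₂ ∘ e₂) (Ioo (1 / 2) 1) := fun t ht => by
    show q (joinPaths γ₁ γ₂) t = q γ₂ (2 * t - 1)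
    simp only [q, joinPaths, if_neg (not_le.2 ht.1)]
  have hf₁ : HasFiniteJumps (q γ₁ ∘ e₁) 0 (1 / 2) := HasFiniteJumps.comp_orderIso <| by
    rw [he₁0, he₁h]; exact hasFiniteJumps_of_finiteReZSegments h1 hp1
  have hf₂ : HasFiniteJumps (q γ₂ ∘ e₂) (1 / 2) 1 := HasFiniteJumps.comp_orderIso <| by
    rw [he₂h, he₂1]; exact hasFiniteJumps_of_finiteReZSegments h2 hp2
  change cindexE 0 1 (q _) = cindexE 0 1 (q γ₁) + cindexE 0 1 (q γ₂)
  rw [cindexE_add (by norm_num) (by norm_num) (hf₁.congr hq₁.symm) (hf₂.congr hq₂.symm),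
    cindexE_congr hq₁, cindexE_congr hq₂, cindexE_comp_orderIso, cindexE_comp_orderIso,
    he₁0, he₁h, he₂h, he₂1]

theorem cindex_pathE_joinpaths (γ₁ γ₂ : ℝ → ℂ) (z₀ : ℂ)
    (h1 : finiteReZSegments γ₁ z₀) (h2 : finiteReZSegments γ₂ z₀)
    (hp1 : ContinuousOn γ₁ (Set.Icc 0 1)) (hp2 : ContinuousOn γ₂ (Set.Icc 0 1))
    (hjoin : γ₁ 1 = γ₂ 0) :
    cindexPathE (joinPaths γ₁ γ₂) z₀ = cindexPathE γ₁ z₀ + cindexPathE γ₂ z₀ :=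
  cindex_pathE_joinpaths_general γ₁ γ₂ z₀ h1 h2 hp1 hp2
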